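/- arXiv:1109.2283 — 4 statements merged into one kernel-verified Lean document; each statement's English description precedes it below -/
import Mathlib

section
/- Let G be a topological group with a compatible left-invariant metric d_G and identity 1_G. For g ∈ G and r ≥ 0 define Γ_G(g,r) = max{r, sup{d_G(1_G, g⁻¹hg) : h ∈ G, d_G(1_G,h) ≤ r}}. Then for all g₁, g₂ ∈ G and r ≥ 0, |Γ_G(g₁,r) − Γ_G(g₂,r)| ≤ 2·d_G(g₁,g₂). -/
/-! Left invariance turns `d(1, g⁻¹hg)` into `d(g, hg)`, and moving `g` to `g'` moves both
arguments of this distance by `d(g, g')`, since `d(hg, hg') = d(g, g')`. So the two suprema are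
taken over the same ball, of functions that differ pointwise by at most `2 d(g, g')`, and taking
the maximum with `r` is `1`-Lipschitz. -/

open Set

lemma Real.sSup_image_le_sSup_image_add {ι : Type*} {s : Set ι} {f g : ι → ℝ} {c : ℝ}
    (hs : s.Nonempty) (hg : BddAbove (g '' s)) (hfg : ∀ i ∈ s, f i ≤ g i + c) :
    sSup (f '' s) ≤ sSup (g '' s) + c :=
  csSup_le (hs.image f) <| by
    rintro _ ⟨i, hi, rfl⟩
    exact (hfg i hi).trans (add_le_add_left (le_csSup hg ⟨i, hi, rfl⟩) c)

-- `f` is bounded above on `s` iff `g` is; if neither is, both `sSup` are the junk value `0`.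
lemma Real.abs_sSup_image_sub_sSup_image_le {ι : Type*} {s : Set ι} {f g : ι → ℝ} {c : ℝ}
    (hs : s.Nonempty) (hfg : ∀ i ∈ s, |f i - g i| ≤ c) :
    |sSup (f '' s) - sSup (g '' s)| ≤ c := by
  have hf_le : ∀ i ∈ s, f i ≤ g i + c := fun i hi => by linarith [(abs_le.1 (hfg i hi)).2]
  have hg_le : ∀ i ∈ s, g i ≤ f i + c := fun i hi => by linarith [(abs_le.1 (hfg i hi)).1]
  have hbdd_iff : BddAbove (f '' s) ↔ BddAbove (g '' s) := by
    constructor <;> rintro ⟨b, hb⟩ <;> refine ⟨b + c, ?_⟩ <;> rintro _ ⟨i, hi, rfl⟩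
    · linarith [hg_le i hi, hb ⟨i, hi, rfl⟩]
    · linarith [hf_le i hi, hb ⟨i, hi, rfl⟩]
  by_cases hg : BddAbove (g '' s)
  · rw [abs_sub_le_iff]
    constructor
    · linarith [Real.sSup_image_le_sSup_image_add hs hg hf_le]
    · linarith [Real.sSup_image_le_sSup_image_add hs (hbdd_iff.2 hg) hg_le]
  · obtain ⟨i, hi⟩ := hs
    rw [Real.sSup_of_not_bddAbove hg, Real.sSup_of_not_bddAbove (mt hbdd_iff.1 hg), sub_zero,
      abs_zero]
    exact (abs_nonneg _).trans (hfg i hi)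

section IsometricConj

variable {G : Type*} [Group G] [PseudoMetricSpace G] [IsIsometricSMul G G]

lemma dist_one_conj (g h : G) : dist 1 (g⁻¹ * h * g) = dist g (h * g) := by
  rw [← dist_mul_left g, mul_one, mul_assoc, mul_inv_cancel_left]

lemma abs_dist_one_conj_sub_le (g₁ g₂ h : G) :
    |dist 1 (g₁⁻¹ * h * g₁) - dist 1 (g₂⁻¹ * h * g₂)| ≤ 2 * dist g₁ g₂ := by
  rw [dist_one_conj, dist_one_conj, ← Real.dist_eq, two_mul]
  calc dist (dist g₁ (h * g₁)) (dist g₂ (h * g₂)) ≤ dist g₁ g₂ + dist (h * g₁) (h * g₂) :=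
        dist_dist_dist_le _ _ _ _
    _ = dist g₁ g₂ + dist g₁ g₂ := by rw [dist_mul_left]

end IsometricConj

theorem stmt_0_general {G : Type*} [Group G] [MetricSpace G]
    (hleft : ∀ g h k : G, dist (g * h) (g * k) = dist h k)
    (ΓG : G → ℝ → ℝ)
    (hΓ : ∀ g r, ΓG g r =
      max r (sSup {s : ℝ | ∃ h : G, dist (1 : G) h ≤ r ∧ s = dist (1 : G) (g⁻¹ * h * g)})) :
    ∀ (g₁ g₂ : G) (r : ℝ), 0 ≤ r → |ΓG g₁ r - ΓG g₂ r| ≤ 2 * dist g₁ g₂ := by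
  intro g₁ g₂ r hr
  have : IsIsometricSMul G G := ⟨fun g => Isometry.of_dist_eq (hleft g)⟩
  have hset : ∀ g : G, {s : ℝ | ∃ h : G, dist (1 : G) h ≤ r ∧ s = dist (1 : G) (g⁻¹ * h * g)} =
      (fun h => dist 1 (g⁻¹ * h * g)) '' {h | dist 1 h ≤ r} := fun g => by
    ext s; simp only [mem_ofPred_eq, mem_image, eq_comm]
  rw [hΓ, hΓ, hset, hset, max_comm r, max_comm r]
  refine (abs_max_sub_max_le_abs _ _ r).trans ?_
  exact Real.abs_sSup_image_sub_sSup_image_le ⟨1, by simpa using hr⟩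
    fun h _ => abs_dist_one_conj_sub_le g₁ g₂ h

/-- Proposition 2.2: for a topological group `G` with a compatible left-invariant
metric `d`, with `Γ_G(g,r) = max r (sup {d 1 (g⁻¹hg) : d 1 h ≤ r})`,
we have `|Γ_G(g₁,r) − Γ_G(g₂,r)| ≤ 2 d(g₁,g₂)`. -/
theorem stmt_0 {G : Type*} [Group G] [MetricSpace G] [IsTopologicalGroup G]
    (hleft : ∀ g h k : G, dist (g * h) (g * k) = dist h k)
    (ΓG : G → ℝ → ℝ)
    (hΓ : ∀ g r, ΓG g r =
      max r (sSup {s : ℝ | ∃ h : G, dist (1 : G) h ≤ r ∧ s = dist (1 : G) (g⁻¹ * h * g)}))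
    (hbdd : ∀ g r, BddAbove {s : ℝ | ∃ h : G, dist (1 : G) h ≤ r ∧ s = dist (1 : G) (g⁻¹ * h * g)}) :
    ∀ (g₁ g₂ : G) (r : ℝ), 0 ≤ r → |ΓG g₁ r - ΓG g₂ r| ≤ 2 * dist g₁ g₂ :=
  stmt_0_general hleft ΓG hΓ
end

section
/- Let X be a set and let f : ℝ₊ → ℝ₊ satisfy f(r₁) + f(r₂) ≥ f(r₁ + r₂) for all r₁, r₂ ≥ 0 (subadditivity), f monotone increasing, f(r) ≥ r, f(r) = 0 iff r = 0, and f continuous. If f is not the identity, then there exists a ∈ (0,1) such that f(r) > r for all 0 < r ≤ a. -/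
/-!
If `f r = r` held at arbitrarily small `r > 0`, then every `x` lies below some multiple
`(n + 1) r ≤ x + r` of such a fixed point, and monotonicity together with subadditivity gives
`f x ≤ f ((n + 1) r) ≤ (n + 1) r ≤ x + r`. Letting `r → 0` yields `f x ≤ x`, so `f = id`.
-/

open Function

theorem apply_succ_nsmul_le_of_subadditive {M N : Type*} [AddMonoid M] [AddCommMonoid N]
    [PartialOrder N] [IsOrderedAddMonoid N] {f : M → N} (hsub : ∀ a b, f (a + b) ≤ f a + f b)
    (r : M) (n : ℕ) : f ((n + 1) • r) ≤ (n + 1) • f r := by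
  induction n with
  | zero => simp
  | succ n ih =>
    calc f ((n + 1 + 1) • r) = f ((n + 1) • r + r) := by rw [succ_nsmul]
      _ ≤ f ((n + 1) • r) + f r := hsub _ _
      _ ≤ (n + 1) • f r + f r := add_le_add_left ih _
      _ = (n + 1 + 1) • f r := (succ_nsmul _ _).symm

namespace NNReal

theorem eq_id_of_subadditive_of_isFixedPt_arbitrarily_small {f : ℝ≥0 → ℝ≥0}
    (hsub : ∀ a b, f (a + b) ≤ f a + f b) (hmono : Monotone f) (hge : ∀ r, r ≤ f r)
    (hfix : ∀ ε, 0 < ε → ∃ r, 0 < r ∧ r ≤ ε ∧ IsFixedPt f r) : f = id := by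
  funext x
  refine le_antisymm (le_of_forall_pos_le_add fun ε hε => ?_) (hge x)
  obtain ⟨r, hr, hrε, hfr⟩ := hfix ε hε
  set n := ⌊x / r⌋₊
  have hnx : n * r ≤ x := (le_div_iff₀ hr).1 (Nat.floor_le zero_le)
  have hxn : x ≤ (n + 1) * r := ((div_lt_iff₀ hr).1 (Nat.lt_floor_add_one _)).le
  calc f x ≤ f ((n + 1) • r) := hmono (by simpa [nsmul_eq_mul] using hxn)
    _ ≤ (n + 1) • f r := apply_succ_nsmul_le_of_subadditive hsub r n
    _ = n * r + r := by rw [hfr.eq, nsmul_eq_mul]; push_cast; ring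
    _ ≤ x + ε := add_le_add hnx hrε

end NNReal

theorem stmt_2_general (f : NNReal → NNReal)
    (hsub : ∀ r₁ r₂ : NNReal, f (r₁ + r₂) ≤ f r₁ + f r₂)
    (hmono : Monotone f)
    (hge : ∀ r : NNReal, r ≤ f r)
    (hne : f ≠ id) :
    ∃ a : NNReal, 0 < a ∧ a < 1 ∧ ∀ r : NNReal, 0 < r → r ≤ a → r < f r := by
  by_contra! h
  refine hne (NNReal.eq_id_of_subadditive_of_isFixedPt_arbitrarily_small hsub hmono hge
    fun ε hε => ?_)
  have hhalf : min ε 2⁻¹ < 1 := min_lt_of_right_lt (by norm_num)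
  obtain ⟨r, hr, hrε, hfr⟩ := h (min ε 2⁻¹) (lt_min hε (by norm_num)) hhalf
  exact ⟨r, hr, hrε.trans (min_le_left _ _), le_antisymm hfr (hge r)⟩

/-- A subadditive, monotone, continuous function `f : ℝ₊ → ℝ₊` with `f r ≥ r` and
`f r = 0 ↔ r = 0` which is not the identity satisfies `f r > r` for all small `r`. -/
theorem stmt_2 (f : NNReal → NNReal)
    (hsub : ∀ r₁ r₂ : NNReal, f (r₁ + r₂) ≤ f r₁ + f r₂)
    (hmono : Monotone f)
    (hge : ∀ r : NNReal, r ≤ f r)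
    (hzero : ∀ r : NNReal, f r = 0 ↔ r = 0)
    (hcont : Continuous f)
    (hne : f ≠ id) :
    ∃ a : NNReal, 0 < a ∧ a < 1 ∧ ∀ r : NNReal, 0 < r → r ≤ a → r < f r :=
  stmt_2_general f hsub hmono hge hne
end

section
/- Define Γ₀ on 𝒩_ω (the set of eventually-zero sequences of naturals) recursively by Γ₀(0̂,r) = r and for x ∈ 𝒩_m \ 𝒩_{m−1}, Γ₀(x,r) = min{2⁵(1 + 2^{x(0)} + 2^{x(0)+x(1)} + ⋯ + 2^{x(0)+⋯+x(m−1)})·r, Γ₀(π_{m−1}(x),r) + 2^{−m}}. Then for all x, y ∈ 𝒩_ω with d(x,y) ≤ 2^{−n} (i.e., x and y agree on coordinates < n) and all r ≥ 0: Γ₀(y,r) + 2^{−n} ≥ Γ₀(x,r). -/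
/-!
Dropping the last nonzero coordinate `m` costs at most `2^{-(m+1)}` (the second branch of
the min), so summing the geometric series gives `Γ₀(x,r) ≤ Γ₀(π_n x,r) + 2^{-n}`. In the
other direction, truncation never increases `Γ₀(·,r)` for `r ≥ 0`: `Γ₀(x,r)` is at most its
first branch, whose coefficient only grows with `x`. Since `π_n x = π_n y`, the two bounds
combine.
-/

/-- Truncation `π_n`: keep the first `n` coordinates, zero afterwards. -/
def trunc (n : ℕ) (x : ℕ → ℕ) : ℕ → ℕ := fun m => if m < n then x m else 0

open Finset

/-- The set `𝒩_n`, as a predicate. -/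
def ZeroFrom (n : ℕ) (x : ℕ → ℕ) : Prop := ∀ j, n ≤ j → x j = 0

namespace ZeroFrom

variable {k n : ℕ} {x : ℕ → ℕ}

lemma mono (h : ZeroFrom k x) (hkn : k ≤ n) : ZeroFrom n x :=
  fun j hj => h j (hkn.trans hj)

lemma of_succ (h : ZeroFrom (k + 1) x) (hk : x k = 0) : ZeroFrom k x := by
  intro j hj
  rcases hj.eq_or_lt with rfl | hlt
  · exact hk
  · exact h j hlt

end ZeroFrom

section Trunc

variable {k n : ℕ} {x y : ℕ → ℕ}

lemma zeroFrom_trunc (n : ℕ) (x : ℕ → ℕ) : ZeroFrom n (trunc n x) :=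
  fun _ hj => if_neg (Nat.not_lt.2 hj)

lemma trunc_eq_self (h : ZeroFrom k x) (hkn : k ≤ n) : trunc n x = x := by
  funext j
  unfold trunc
  split_ifs with hj
  · rfl
  · exact (h j (hkn.trans (Nat.not_lt.1 hj))).symm

lemma trunc_trunc_of_le (hnk : n ≤ k) : trunc n (trunc k x) = trunc n x := by
  funext j
  unfold trunc
  split_ifs <;> first | rfl | omega

lemma trunc_le_self (n : ℕ) (x : ℕ → ℕ) (j : ℕ) : trunc n x j ≤ x j := by
  unfold trunc
  split_ifs
  · exact le_rfl
  · exact Nat.zero_le _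

lemma trunc_congr (h : ∀ j, j < n → x j = y j) : trunc n x = trunc n y := by
  funext j
  unfold trunc
  split_ifs with hj
  · exact h j hj
  · rfl

end Trunc

noncomputable def gammaCoeff (k : ℕ) (x : ℕ → ℕ) : ℝ :=
  2 ^ 5 * (1 + ∑ i ∈ range k, (2 : ℝ) ^ (∑ j ∈ range (i + 1), x j))

lemma gammaCoeff_mono {k k' : ℕ} {x y : ℕ → ℕ} (hk : k ≤ k') (hxy : ∀ j, x j ≤ y j) :
    gammaCoeff k x ≤ gammaCoeff k' y := by
  unfold gammaCoeff
  gcongr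
  calc ∑ i ∈ range k, (2 : ℝ) ^ (∑ j ∈ range (i + 1), x j)
      ≤ ∑ i ∈ range k, (2 : ℝ) ^ (∑ j ∈ range (i + 1), y j) := by
        gcongr with i
        · norm_num
        · exact hxy _
    _ ≤ ∑ i ∈ range k', (2 : ℝ) ^ (∑ j ∈ range (i + 1), y j) :=
        sum_le_sum_of_subset_of_nonneg (range_subset_range.2 hk) fun _ _ _ => by positivity

lemma two_rpow_neg_sub_one (k : ℕ) : (2 : ℝ) ^ (-(k : ℝ) - 1) = 2 ^ (-(k : ℝ)) / 2 := by
  rw [Real.rpow_sub_one two_ne_zero]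

lemma two_rpow_neg_succ (k : ℕ) : (2 : ℝ) ^ (-((k + 1 : ℕ) : ℝ)) = 2 ^ (-(k : ℝ)) / 2 := by
  rw [← two_rpow_neg_sub_one]
  push_cast
  ring_nf

def SatisfiesRecursion (Γ₀ : (ℕ → ℕ) → ℝ → ℝ) : Prop :=
  ∀ (m : ℕ) (x : ℕ → ℕ), ZeroFrom (m + 1) x → x m ≠ 0 → ∀ r : ℝ,
    Γ₀ x r = min (gammaCoeff (m + 1) x * r) (Γ₀ (trunc m x) r + 2 ^ (-(m : ℝ) - 1))

namespace SatisfiesRecursion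

variable {Γ₀ : (ℕ → ℕ) → ℝ → ℝ} (hrec : SatisfiesRecursion Γ₀)
include hrec

lemma le_trunc_add {k : ℕ} {x : ℕ → ℕ} (h : ZeroFrom (k + 1) x) (r : ℝ) :
    Γ₀ x r ≤ Γ₀ (trunc k x) r + 2 ^ (-(k : ℝ) - 1) := by
  by_cases hk : x k = 0
  · rw [trunc_eq_self (h.of_succ hk) le_rfl]
    exact le_add_of_nonneg_right (by positivity)
  · rw [hrec k x h hk r]
    exact min_le_right _ _

lemma le_trunc_add_sub {n k : ℕ} (hnk : n ≤ k) {x : ℕ → ℕ} (h : ZeroFrom k x) (r : ℝ) :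
    Γ₀ x r ≤ Γ₀ (trunc n x) r + (2 ^ (-(n : ℝ)) - 2 ^ (-(k : ℝ))) := by
  induction k, hnk using Nat.le_induction generalizing x with
  | base => simp [trunc_eq_self h le_rfl]
  | succ k hnk ih =>
    have ih' := ih (zeroFrom_trunc k x)
    rw [trunc_trunc_of_le hnk] at ih'
    calc Γ₀ x r ≤ Γ₀ (trunc k x) r + 2 ^ (-(k : ℝ) - 1) := hrec.le_trunc_add h r
      _ ≤ Γ₀ (trunc n x) r + (2 ^ (-(n : ℝ)) - 2 ^ (-(k : ℝ))) + 2 ^ (-(k : ℝ) - 1) := by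
          gcongr
      _ = Γ₀ (trunc n x) r + (2 ^ (-(n : ℝ)) - 2 ^ (-((k + 1 : ℕ) : ℝ))) := by
          rw [two_rpow_neg_sub_one, two_rpow_neg_succ]
          ring

variable (hzero : ∀ r : ℝ, Γ₀ (fun _ => 0) r = r)
include hzero

lemma le_gammaCoeff_mul {k : ℕ} {x : ℕ → ℕ} (h : ZeroFrom k x) {r : ℝ} (hr : 0 ≤ r) :
    Γ₀ x r ≤ gammaCoeff k x * r := by
  induction k generalizing x with
  | zero =>
    obtain rfl : x = fun _ => 0 := funext fun j => h j (Nat.zero_le j)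
    rw [hzero]
    simp only [gammaCoeff, range_zero, sum_empty, add_zero, mul_one]
    linarith
  | succ k ih =>
    by_cases hk : x k = 0
    · exact (ih (h.of_succ hk)).trans
        (mul_le_mul_of_nonneg_right (gammaCoeff_mono k.le_succ fun _ => le_rfl) hr)
    · rw [hrec k x h hk r]
      exact min_le_left _ _

lemma trunc_le {k : ℕ} {y : ℕ → ℕ} (h : ZeroFrom k y) (n : ℕ) {r : ℝ} (hr : 0 ≤ r) :
    Γ₀ (trunc n y) r ≤ Γ₀ y r := by
  induction k generalizing y with
  | zero => rw [trunc_eq_self h (Nat.zero_le n)]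
  | succ k ih =>
    rcases le_or_gt (k + 1) n with hkn | hnk
    · rw [trunc_eq_self h hkn]
    have hle : Γ₀ (trunc n y) r ≤ Γ₀ (trunc k y) r := by
      simpa only [trunc_trunc_of_le (Nat.lt_succ_iff.1 hnk)] using ih (zeroFrom_trunc k y)
    by_cases hk : y k = 0
    · rwa [trunc_eq_self (h.of_succ hk) le_rfl] at hle
    rw [hrec k y h hk r]
    refine le_min ?_ (hle.trans (le_add_of_nonneg_right (by positivity)))
    calc Γ₀ (trunc n y) r ≤ gammaCoeff (k + 1) (trunc n y) * r :=
          hrec.le_gammaCoeff_mul hzero ((zeroFrom_trunc n y).mono hnk.le) hr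
      _ ≤ gammaCoeff (k + 1) y * r :=
          mul_le_mul_of_nonneg_right (gammaCoeff_mono le_rfl (trunc_le_self n y)) hr

end SatisfiesRecursion

/-- (G1) for the scale Γ₀ of Example 4.11: if Γ₀ satisfies the defining recursion
(`Γ₀(0̂,r) = r` and, for `x ∈ 𝒩_{m+1} \ 𝒩_m`,
`Γ₀(x,r) = min{2⁵(1 + Σ_{i≤m} 2^{x(0)+⋯+x(i)})·r, Γ₀(π_m(x),r) + 2^{-(m+1)}}`),
then whenever `x` and `y` agree on coordinates `< n` (i.e. `d(x,y) ≤ 2^{-n}`),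
`Γ₀(y,r) + 2^{-n} ≥ Γ₀(x,r)`. -/
theorem stmt_9 (Γ₀ : (ℕ → ℕ) → ℝ → ℝ)
    (hzero : ∀ r : ℝ, Γ₀ (fun _ => 0) r = r)
    (hrec : ∀ (m : ℕ) (x : ℕ → ℕ), (∀ j, m + 1 ≤ j → x j = 0) → x m ≠ 0 →
      ∀ r : ℝ, Γ₀ x r =
        min ((2 ^ 5 * (1 + ∑ i ∈ Finset.range (m + 1),
              (2 : ℝ) ^ (∑ j ∈ Finset.range (i + 1), x j))) * r)
            (Γ₀ (trunc m x) r + 2 ^ (-(m : ℝ) - 1))) :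
    ∀ (x y : ℕ → ℕ), (∃ n, ∀ j, n ≤ j → x j = 0) → (∃ n, ∀ j, n ≤ j → y j = 0) →
      ∀ n : ℕ, (∀ j, j < n → x j = y j) →
        ∀ r : ℝ, 0 ≤ r → Γ₀ x r ≤ Γ₀ y r + 2 ^ (-(n : ℝ)) := by
  intro x y ⟨kx, hx⟩ ⟨ky, hy⟩ n hxy r hr
  have hΓ : SatisfiesRecursion Γ₀ := hrec
  have hxk : ZeroFrom (max n kx) x := (show ZeroFrom kx x from hx).mono (le_max_right n kx)
  calc Γ₀ x r ≤ Γ₀ (trunc n x) r + (2 ^ (-(n : ℝ)) - 2 ^ (-(max n kx : ℕ) : ℝ)) :=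
        hΓ.le_trunc_add_sub (le_max_left n kx) hxk r
    _ ≤ Γ₀ (trunc n y) r + 2 ^ (-(n : ℝ)) := by
        rw [trunc_congr hxy]
        linarith [show (0 : ℝ) < 2 ^ (-(max n kx : ℕ) : ℝ) by positivity]
    _ ≤ Γ₀ y r + 2 ^ (-(n : ℝ)) := by
        gcongr
        exact hΓ.trunc_le hzero hy n hr
end

section
/- Let m ≤ n be natural numbers and call a bijection θ on {m, …, n} a match if θ∘θ = id and there are no i, j with m ≤ i < j < θ(i) < θ(j). If θ is a match on {0, …, l} with l > 0 and θ(0) = k < l, then θ restricted to {0, …, k} and θ restricted to {k+1, …, l} are both matches (in particular θ maps each of these intervals into itself). -/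
/-
If `θ m = k`, then any `i` strictly between `m` and `k` must satisfy `θ i < k`, for otherwise
`m < i < k < θ i` would be a crossing. Applying this to `θ i` and using `θ (θ i) = i` shows that
points beyond `k` stay beyond `k`. So both intervals are invariant, and the involution and
no-crossing conditions are inherited from the larger interval.
-/

/-- `θ` is a match on the integer interval `{m, …, n}`: it maps the interval to
itself, is an involution there, and has no crossing pair `i < j < θ i < θ j`. -/
def IsMatch (m n : ℕ) (θ : ℕ → ℕ) : Prop :=
  (∀ i, m ≤ i → i ≤ n → m ≤ θ i ∧ θ i ≤ n) ∧
  (∀ i, m ≤ i → i ≤ n → θ (θ i) = i) ∧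
  ¬∃ i j, m ≤ i ∧ i < j ∧ j < θ i ∧ θ i < θ j ∧ θ j ≤ n

namespace IsMatch

variable {m n : ℕ} {θ : ℕ → ℕ}

theorem of_mapsTo_subinterval {m' n' : ℕ} (h : IsMatch m n θ) (hm : m ≤ m') (hn : n' ≤ n)
    (hmaps : ∀ i, m' ≤ i → i ≤ n' → m' ≤ θ i ∧ θ i ≤ n') : IsMatch m' n' θ := by
  obtain ⟨-, hinv, hcross⟩ := h
  refine ⟨hmaps, fun i hi hin => hinv i (by omega) (by omega), ?_⟩
  rintro ⟨i, j, hi, hij, hjθ, hθθ, hθj⟩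
  exact hcross ⟨i, j, by omega, hij, hjθ, hθθ, by omega⟩

theorem apply_le_apply_left (h : IsMatch m n θ) (hmn : m ≤ n) {i : ℕ} (hi : m ≤ i)
    (hik : i ≤ θ m) : θ i ≤ θ m := by
  obtain ⟨hmap, hinv, hcross⟩ := h
  have hθm := hmap m le_rfl hmn
  by_contra! hlt
  rcases hi.eq_or_lt with rfl | hmi
  · exact lt_irrefl _ hlt
  rcases hik.eq_or_lt with rfl | hik
  · rw [hinv m le_rfl hmn] at hlt
    omega
  exact hcross ⟨m, i, le_rfl, hmi, hik, hlt, (hmap i hi (by omega)).2⟩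

theorem apply_left_lt_apply (h : IsMatch m n θ) (hmn : m ≤ n) {i : ℕ} (hi : θ m < i)
    (hin : i ≤ n) : θ m < θ i := by
  have hmi : m ≤ i := by have := (h.1 m le_rfl hmn).1; omega
  by_contra! hle
  have := h.apply_le_apply_left hmn (h.1 i hmi hin).1 hle
  rw [h.2.1 i hmi hin] at this
  omega

end IsMatch

theorem stmt_15_general (l k : ℕ) (θ : ℕ → ℕ)
    (hθ : IsMatch 0 l θ) (hk : θ 0 = k) (hkl : k < l) :
    IsMatch 0 k θ ∧ IsMatch (k + 1) l θ := by
  subst hk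
  constructor
  · refine hθ.of_mapsTo_subinterval le_rfl hkl.le fun i _ hi => ⟨Nat.zero_le _, ?_⟩
    exact hθ.apply_le_apply_left (Nat.zero_le l) (Nat.zero_le i) hi
  · refine hθ.of_mapsTo_subinterval (Nat.zero_le _) le_rfl fun i hi hil =>
      ⟨hθ.apply_left_lt_apply (Nat.zero_le l) hi hil, (hθ.1 i (by omega) hil).2⟩

/-- If `θ` is a match on `{0, …, l}` with `l > 0` and `θ 0 = k < l`, then the
restrictions of `θ` to `{0, …, k}` and to `{k+1, …, l}` are matches. -/
theorem stmt_15 (l k : ℕ) (θ : ℕ → ℕ) (hl : 0 < l)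
    (hθ : IsMatch 0 l θ) (hk : θ 0 = k) (hkl : k < l) :
    IsMatch 0 k θ ∧ IsMatch (k + 1) l θ :=
  stmt_15_general l k θ hθ hk hkl
end
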